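/- Let α: ℂⁿ → ℂ* be a smooth group homomorphism from the additive group ℂⁿ. Then there exists a unique unitary character β: ℂⁿ → ℂ* (a group homomorphism with |β(z)| = 1 for all z) such that α·β⁻¹ is a holomorphic function on ℂⁿ. -/

import Mathlib

open Complex Set

private lemma stmt5_rep (n : ℕ) (α : (Fin n → ℂ) → ℂ)
    (hhom : ∀ z w, α (z + w) = α z * α w) (hne : ∀ z, α z ≠ 0)
    (hsmooth : ContDiff ℝ (⊤ : ℕ∞) α) :
    ∀ z, α z = Complex.exp (fderiv ℝ α 0 z) := by
  have hdiff : Differentiable ℝ α := hsmooth.differentiable (by simp)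
  have h0 : α 0 = 1 := by
    have := hhom 0 0
    simp only [add_zero] at this
    have h := hne 0
    field_simp at this
    tauto
  intro z
  set D := fderiv ℝ α 0 with hD
  set c := D z with hc
  -- derivative of s ↦ α (s • z) at any t
  have hg : ∀ t : ℝ, HasDerivAt (fun s : ℝ => α (s • z)) (α (t • z) * c) t := by
    intro t
    have h1 : HasDerivAt (fun s : ℝ => (s - t) • z) ((1 : ℝ) • z) t := by
      exact ((hasDerivAt_id t).sub_const t).smul_const z
    have h2 : HasFDerivAt α D ((t - t) • z) := by
      simpa using (hdiff 0).hasFDerivAt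
    have h3 : HasDerivAt (fun s : ℝ => α ((s - t) • z)) (D ((1:ℝ) • z)) t :=
      h2.comp_hasDerivAt t h1
    have h4 : HasDerivAt (fun s : ℝ => α (t • z) * α ((s - t) • z))
        (α (t • z) * D ((1:ℝ) • z)) t := h3.const_mul _
    have heq : (fun s : ℝ => α (t • z) * α ((s - t) • z)) = fun s : ℝ => α (s • z) := by
      funext s
      rw [← hhom]
      congr 1
      module
    rw [heq] at h4
    simpa using h4
  -- F t := α (t • z) * exp (-(t • c)) is constant
  have hF : ∀ t : ℝ, HasDerivAt (fun s : ℝ => α (s • z) * Complex.exp (-(s : ℂ) * c)) 0 t := by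
    intro t
    have he : HasDerivAt (fun w : ℂ => Complex.exp (-w * c)) (Complex.exp (-(t:ℂ) * c) * (-1 * c)) (t : ℂ) :=
      (((hasDerivAt_id ((t:ℝ) : ℂ)).neg).mul_const c).cexp
    have he' : HasDerivAt (fun s : ℝ => Complex.exp (-(s:ℂ) * c)) (Complex.exp (-(t:ℂ) * c) * (-1 * c)) t :=
      he.comp_ofReal
    have : HasDerivAt (fun s : ℝ => α (s • z) * Complex.exp (-(s : ℂ) * c)) _ t := (hg t).mul he'
    convert this using 1
    ring
  have hconst : ∀ t : ℝ, (fun s : ℝ => α (s • z) * Complex.exp (-(s : ℂ) * c)) t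
      = (fun s : ℝ => α (s • z) * Complex.exp (-(s : ℂ) * c)) 0 := by
    intro t
    exact is_const_of_deriv_eq_zero (fun s => (hF s).differentiableAt)
      (fun s => (hF s).deriv) t 0
  have h1 := hconst 1
  simp only [one_smul, zero_smul, h0, Complex.ofReal_zero, Complex.ofReal_one, neg_zero,
    zero_mul, Complex.exp_zero, mul_one, one_mul] at h1
  -- h1 : α z * exp (-c) = 1
  calc α z = α z * (Complex.exp (-(1:ℂ) * c) * Complex.exp ((1:ℂ) * c)) := by
        rw [← Complex.exp_add]; simp
    _ = (α z * Complex.exp (-(1:ℂ) * c)) * Complex.exp ((1:ℂ) * c) := by ring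
    _ = Complex.exp c := by rw [h1]; simp

/-- For every smooth character `α : ℂⁿ → ℂ*` of the additive group `ℂⁿ` there is a
unique unitary character `β` such that `α·β⁻¹` is holomorphic. -/
theorem stmt5 (n : ℕ) (α : (Fin n → ℂ) → ℂ)
    (hhom : ∀ z w, α (z + w) = α z * α w) (hne : ∀ z, α z ≠ 0)
    (hsmooth : ContDiff ℝ (⊤ : ℕ∞) α) :
    ∃! β : (Fin n → ℂ) → ℂ,
      (∀ z w, β (z + w) = β z * β w) ∧ (∀ z, ‖β z‖ = 1) ∧
        Differentiable ℂ (fun z => α z / β z) := by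
  have hrep := stmt5_rep n α hhom hne hsmooth
  set D := fderiv ℝ α 0 with hD
  set A : (Fin n → ℂ) → ℂ := fun z => (D z + Complex.I * D (Complex.I • z)) / 2 with hA
  set μ : (Fin n → ℂ) → ℂ := fun z => A z - (starRingEnd ℂ) (A z) with hμ
  set β : (Fin n → ℂ) → ℂ := fun z => Complex.exp (μ z) with hβ
  set φ : (Fin n → ℂ) → ℂ := fun z => D z - μ z with hφ
  -- φ is ℂ-linear
  have hφadd : ∀ z w, φ (z + w) = φ z + φ w := by
    intro z w
    simp only [hφ, hμ, hA, smul_add, map_add, map_sub, map_div₀, map_mul, map_ofNat]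
    ring
  have hφI : ∀ z, φ (Complex.I • z) = Complex.I * φ z := by
    intro z
    have h1 : Complex.I • Complex.I • z = -z := by
      rw [smul_smul, Complex.I_mul_I]; simp
    simp only [hφ, hμ, hA, h1, map_neg, map_sub, map_add, map_div₀, map_mul, map_ofNat,
      Complex.conj_I, Complex.conj_conj]
    ring_nf
    simp only [Complex.I_sq]
    ring
  have hφR : ∀ (r : ℝ) (z : Fin n → ℂ), φ ((r : ℂ) • z) = (r : ℂ) * φ z := by
    intro r z
    rw [Complex.coe_smul]
    have h1 : Complex.I • (r • z) = r • (Complex.I • z) := smul_comm _ _ _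
    have h2 : ∀ w : Fin n → ℂ, D (r • w) = (r : ℂ) * D w := by
      intro w; rw [D.map_smul]; simp [Complex.real_smul]
    simp only [hφ, hμ, hA, h1, h2, map_sub, map_add, map_div₀, map_mul, map_ofNat,
      Complex.conj_ofReal]
    ring
  have hφsmul : ∀ (a : ℂ) (z : Fin n → ℂ), φ (a • z) = a * φ z := by
    intro a z
    have hz : a • z = (a.re : ℂ) • z + (a.im : ℂ) • (Complex.I • z) := by
      rw [smul_smul, ← add_smul]
      congr 1
      exact (Complex.re_add_im a).symm
    rw [hz, hφadd, hφR, hφR, hφI]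
    conv_rhs => rw [← Complex.re_add_im a]
    ring
  -- bundle φ as a continuous linear map
  let ℓ : (Fin n → ℂ) →ₗ[ℂ] ℂ :=
    { toFun := φ, map_add' := hφadd, map_smul' := hφsmul }
  have hℓdiff : Differentiable ℂ φ := by
    have := (LinearMap.toContinuousLinearMap ℓ).differentiable
    exact this
  -- properties of β
  have hβhom : ∀ z w, β (z + w) = β z * β w := by
    intro z w
    simp only [hβ, hμ, hA, smul_add, map_add, map_sub, map_div₀, map_mul, map_ofNat,
      ← Complex.exp_add]
    congr 1
    ring
  have hβabs : ∀ z, ‖β z‖ = 1 := by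
    intro z
    simp only [hβ, Complex.norm_exp]
    have : (μ z).re = 0 := by
      simp [hμ, Complex.sub_re, Complex.conj_re]
    rw [this, Real.exp_zero]
  have hβne : ∀ z, β z ≠ 0 := fun z => Complex.exp_ne_zero _
  have hquot : (fun z => α z / β z) = fun z => Complex.exp (φ z) := by
    funext z
    rw [hrep z, hβ, hφ]
    rw [Complex.exp_sub]
  have hβdiff : Differentiable ℂ (fun z => α z / β z) := by
    rw [hquot]
    exact hℓdiff.cexp
  refine ⟨β, ⟨hβhom, hβabs, hβdiff⟩, ?_⟩
  -- uniqueness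
  rintro y ⟨hyhom, hyabs, hydiff⟩
  have hyne : ∀ z, y z ≠ 0 := by
    intro z hz
    have := hyabs z
    rw [hz] at this
    simp at this
  have hα0 : α 0 = 1 := by
    have := hhom 0 0
    simp only [add_zero] at this
    have h := hne 0
    field_simp at this
    tauto
  have hone : ∀ (γ : (Fin n → ℂ) → ℂ), (∀ z w, γ (z + w) = γ z * γ w) →
      (∀ z, γ z ≠ 0) → γ 0 = 1 := by
    intro γ hg hgne
    have := hg 0 0
    simp only [add_zero] at this
    have h := hgne 0
    field_simp at this
    tauto
  have hy0 : y 0 = 1 := hone y hyhom hyne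
  have hβ0 : β 0 = 1 := hone β hβhom hβne
  set h : (Fin n → ℂ) → ℂ := fun z => (α z / y z) / (α z / β z) with hh
  have hhdiff : Differentiable ℂ h := by
    show Differentiable ℂ fun z => (α z / y z) / (α z / β z)
    have hinv : Differentiable ℂ fun z => (α z / β z)⁻¹ :=
      hβdiff.inv fun z => div_ne_zero (hne z) (hβne z)
    simpa only [div_eq_mul_inv, Pi.mul_def] using hydiff.mul hinv
  have hhabs : ∀ z, ‖h z‖ = 1 := by
    intro z
    simp only [hh, norm_div]
    rw [hyabs z, hβabs z]
    field_simp [norm_ne_zero_iff.mpr (hne z)]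
  have hbdd : Bornology.IsBounded (Set.range h) := by
    rw [Metric.isBounded_iff_subset_closedBall 0]
    refine ⟨1, ?_⟩
    rintro _ ⟨z, rfl⟩
    simp [hhabs z]
  have hconst : ∀ z, h z = h 0 := fun z =>
    hhdiff.apply_eq_apply_of_bounded hbdd z 0
  funext z
  have h1 : h z = 1 := by
    rw [hconst z, hh]
    simp [hα0, hy0, hβ0]
  rw [hh] at h1
  have h2 : α z / y z = α z / β z :=
    (div_eq_one_iff_eq (div_ne_zero (hne z) (hβne z))).1 h1
  rw [div_eq_div_iff (hyne z) (hβne z)] at h2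
  exact (mul_left_cancel₀ (hne z) h2).symm
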